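/- arXiv:1104.0619 — 2 statements merged into one kernel-verified Lean document; each statement's English description precedes it below -/
import Mathlib

section
/- There exists a constant C such that for all k ∈ ℝ and σ ≥ 0, |e^{−|k|σ} − e^{−κ(k)σ}| ≤ C (|k|^{1/2} + |k|) σ e^{−|k|σ}, where κ(k) = √(k² − ik). -/
/-!
Since `|k| ≤ Re κ(k)`, both `|k| σ` and `κ(k) σ` lie in the half-plane `Re z ≥ |k| σ`, on which
`z ↦ e^{-z}` is `e^{-|k| σ}`-Lipschitz. Hence the difference is at most
`e^{-|k| σ} ‖κ(k) - |k|‖ σ`, and `‖κ(k) - |k|‖ ≤ ‖κ(k)‖ + |k| ≤ 2 (|k|^{1/2} + |k|)`.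
-/

noncomputable def kappa (k : ℝ) : ℂ := ((k : ℂ)^2 - Complex.I * k) ^ ((1:ℂ)/2)

open Complex

theorem Complex.norm_exp_neg_sub_exp_neg_le {r : ℝ} {a b : ℂ} (ha : r ≤ a.re) (hb : r ≤ b.re) :
    ‖exp (-a) - exp (-b)‖ ≤ Real.exp (-r) * ‖a - b‖ := by
  have hderiv : ∀ z ∈ {z : ℂ | r ≤ z.re},
      HasDerivWithinAt (fun z => exp (-z)) (exp (-z) * -1) {z : ℂ | r ≤ z.re} z :=
    fun z _ => (hasDerivAt_neg z).cexp.hasDerivWithinAt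
  have hbound : ∀ z ∈ {z : ℂ | r ≤ z.re}, ‖exp (-z) * -1‖ ≤ Real.exp (-r) := by
    intro z hz
    rw [norm_mul, norm_neg, norm_one, mul_one, norm_exp, neg_re, Real.exp_le_exp, neg_le_neg_iff]
    exact hz
  exact Convex.norm_image_sub_le_of_norm_hasDerivWithin_le hderiv hbound
    (convex_halfSpace_re_ge r) hb ha

lemma re_sq_sub_I_mul (k : ℝ) : ((k : ℂ)^2 - I * k).re = k^2 := by
  simp [pow_two]

lemma abs_le_kappa_re (k : ℝ) : |k| ≤ (kappa k).re := by
  rw [kappa, one_div, cpow_inv_two_re, re_sq_sub_I_mul, ← Real.sqrt_sq_eq_abs]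
  apply Real.sqrt_le_sqrt
  have h := re_le_norm ((k : ℂ)^2 - I * k)
  rw [re_sq_sub_I_mul] at h
  linarith

lemma norm_kappa_le (k : ℝ) : ‖kappa k‖ ≤ √|k| + |k| := by
  have hexp : (1 : ℂ) / 2 = ((1 / 2 : ℝ) : ℂ) := by norm_num
  rw [kappa, hexp, norm_cpow_real, ← Real.sqrt_eq_rpow]
  have hnorm : ‖(k : ℂ)^2 - I * k‖ ≤ k^2 + |k| :=
    (norm_sub_le _ _).trans_eq (by simp [norm_pow, sq_abs])
  have hsq : k^2 + |k| ≤ (√|k| + |k|)^2 := by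
    nlinarith [Real.sq_sqrt (abs_nonneg k), Real.sqrt_nonneg |k|, sq_abs k, abs_nonneg k]
  calc √‖(k : ℂ)^2 - I * k‖ ≤ √((√|k| + |k|)^2) := Real.sqrt_le_sqrt (hnorm.trans hsq)
    _ = √|k| + |k| := Real.sqrt_sq (by positivity)

lemma norm_kappa_sub_abs_le (k : ℝ) :
    ‖kappa k - ((|k| : ℝ) : ℂ)‖ ≤ 2 * (|k| ^ ((1:ℝ)/2) + |k|) := by
  rw [← Real.sqrt_eq_rpow]
  calc ‖kappa k - ((|k| : ℝ) : ℂ)‖ ≤ ‖kappa k‖ + |k| := by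
        simpa using norm_sub_le (kappa k) ((|k| : ℝ) : ℂ)
    _ ≤ √|k| + |k| + |k| := by linarith [norm_kappa_le k]
    _ ≤ 2 * (√|k| + |k|) := by linarith [Real.sqrt_nonneg |k|]

theorem exp_diff_bound :
    ∃ C : ℝ, ∀ k σ : ℝ, 0 ≤ σ →
      ‖Complex.exp (-((|k| : ℝ) : ℂ) * σ) - Complex.exp (-kappa k * σ)‖
        ≤ C * (|k| ^ ((1:ℝ)/2) + |k|) * σ * Real.exp (-|k| * σ) := by
  refine ⟨2, fun k σ hσ => ?_⟩
  have hre : |k| * σ ≤ (kappa k * σ).re := by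
    rw [re_mul_ofReal]
    exact mul_le_mul_of_nonneg_right (abs_le_kappa_re k) hσ
  have hlip := norm_exp_neg_sub_exp_neg_le (a := ((|k| : ℝ) : ℂ) * σ) (by simp) hre
  rw [← sub_mul, norm_mul, norm_sub_rev ((|k| : ℝ) : ℂ), norm_real, Real.norm_of_nonneg hσ]
    at hlip
  simp only [neg_mul] at hlip ⊢
  calc _ ≤ Real.exp (-(|k| * σ)) * (‖kappa k - ((|k| : ℝ) : ℂ)‖ * σ) := hlip
    _ ≤ Real.exp (-(|k| * σ)) * (2 * (|k| ^ ((1:ℝ)/2) + |k|) * σ) := by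
        gcongr
        exact norm_kappa_sub_abs_le k
    _ = _ := by ring
end

section
/- For k ≠ 0 and s′ ≥ 0, t ≥ 1 with |k| > t^{−s′}, one has t^{−s′/2} |κ(k)|^{−1} ≤ C μ_{1/2,s′}(k,t) and t^{−s′} |κ(k)|^{−1} ≤ C μ_{1,s′}(k,t), for a universal constant C, where κ(k) = √(k² − ik) and μ_{α,r}(k,t) = 1/(1+(|k|t^r)^α). -/
/-! Since `κ(k)² = k (k - i)` and `|k - i| ≥ max |k| 1`, one has `|κ(k)| ≥ |k|^α` for every
`α ∈ [1/2, 1]`. Hence `t^{-s'α} |κ(k)|⁻¹ ≤ (|k| t^{s'})^{-α}`, and as soon as `|k| t^{s'} ≥ 1`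
this is at most `2 μ_{α,s'}(k,t)`, because `1 + X ≤ 2X` for `X ≥ 1`. -/

noncomputable def mu (α r k t : ℝ) : ℝ := 1 / (1 + (|k| * t ^ r) ^ α)

theorem norm_kappa (k : ℝ) : ‖kappa k‖ = √(|k| * ‖(k : ℂ) - Complex.I‖) := by
  rw [kappa, show (1 : ℂ) / 2 = ((1 / 2 : ℝ) : ℂ) by norm_num, Complex.norm_cpow_real,
    ← Real.sqrt_eq_rpow, show (k : ℂ) ^ 2 - Complex.I * k = k * (k - Complex.I) by ring,
    norm_mul, Complex.norm_real, Real.norm_eq_abs]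

theorem max_abs_one_le_norm_sub_I (k : ℝ) : max |k| 1 ≤ ‖(k : ℂ) - Complex.I‖ :=
  max_le (by simpa using Complex.abs_re_le_norm ((k : ℂ) - Complex.I))
    (by simpa using Complex.abs_im_le_norm ((k : ℂ) - Complex.I))

theorem Real.rpow_le_max_one {x γ : ℝ} (hx : 0 ≤ x) (hγ₀ : 0 ≤ γ) (hγ₁ : γ ≤ 1) :
    x ^ γ ≤ max x 1 := by
  rcases le_total x 1 with h | h
  · exact (Real.rpow_le_one hx h hγ₀).trans (le_max_right _ _)
  · exact (Real.rpow_le_rpow_of_exponent_le h hγ₁).trans_eq (Real.rpow_one x) |>.trans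
      (le_max_left _ _)

theorem abs_rpow_le_norm_kappa (k : ℝ) {α : ℝ} (hα₀ : 1 / 2 ≤ α) (hα₁ : α ≤ 1) :
    |k| ^ α ≤ ‖kappa k‖ := by
  have hk := abs_nonneg k
  have key : |k| ^ (2 * α) ≤ |k| * ‖(k : ℂ) - Complex.I‖ := calc
    |k| ^ (2 * α) = |k| * |k| ^ (2 * α - 1) := by
      rw [← Real.rpow_one_add' hk (by linarith)]; ring_nf
    _ ≤ |k| * max |k| 1 := by
      gcongr; exact Real.rpow_le_max_one hk (by linarith) (by linarith)
    _ ≤ |k| * ‖(k : ℂ) - Complex.I‖ := by gcongr; exact max_abs_one_le_norm_sub_I k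
  rw [norm_kappa, ← Real.sqrt_sq (Real.rpow_nonneg hk α), ← Real.rpow_natCast,
    ← Real.rpow_mul hk, mul_comm]
  exact Real.sqrt_le_sqrt (by simpa using key)

theorem rpow_neg_le_two_mul_mu {α r k t : ℝ} (hα : 0 ≤ α) (h : 1 ≤ |k| * t ^ r) :
    (|k| * t ^ r) ^ (-α) ≤ 2 * mu α r k t := by
  have hY : 1 ≤ (|k| * t ^ r) ^ α := Real.one_le_rpow h hα
  rw [mu, Real.rpow_neg (by linarith), inv_eq_one_div, mul_one_div,
    div_le_div_iff₀ (by linarith) (by linarith)]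
  linarith

theorem rpow_mul_inv_norm_kappa_le_two_mul_mu {α s k t : ℝ} (hα₀ : 1 / 2 ≤ α) (hα₁ : α ≤ 1)
    (hk : k ≠ 0) (ht : 0 < t) (h : 1 ≤ |k| * t ^ s) :
    t ^ (-(s * α)) * ‖kappa k‖⁻¹ ≤ 2 * mu α s k t := calc
  t ^ (-(s * α)) * ‖kappa k‖⁻¹ ≤ t ^ (-(s * α)) * (|k| ^ α)⁻¹ := by
    gcongr
    exact abs_rpow_le_norm_kappa k hα₀ hα₁
  _ = (|k| * t ^ s) ^ (-α) := by
    rw [Real.rpow_neg (mul_nonneg (abs_nonneg k) (Real.rpow_nonneg ht.le s)),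
      Real.mul_rpow (abs_nonneg k) (Real.rpow_nonneg ht.le s), ← Real.rpow_mul ht.le,
      Real.rpow_neg ht.le, mul_inv, mul_comm]
  _ ≤ 2 * mu α s k t := rpow_neg_le_two_mul_mu (by linarith) h

theorem inv_kappa_mu_bound :
    ∃ C : ℝ, ∀ k t s' : ℝ, k ≠ 0 → 0 ≤ s' → 1 ≤ t → t ^ (-s') < |k| →
      t ^ (-(s'/2)) * ‖kappa k‖⁻¹ ≤ C * mu (1/2) s' k t ∧
      t ^ (-s') * ‖kappa k‖⁻¹ ≤ C * mu 1 s' k t := by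
  refine ⟨2, fun k t s' hk _ ht hkt => ?_⟩
  have ht₀ : 0 < t := one_pos.trans_le ht
  have h : 1 ≤ |k| * t ^ s' := by
    have := mul_lt_mul_of_pos_right hkt (Real.rpow_pos_of_pos ht₀ s')
    rw [← Real.rpow_add ht₀, neg_add_cancel, Real.rpow_zero] at this
    exact this.le
  constructor
  · simpa [div_eq_mul_one_div s' 2] using
      rpow_mul_inv_norm_kappa_le_two_mul_mu le_rfl (by norm_num) hk ht₀ h
  · simpa using rpow_mul_inv_norm_kappa_le_two_mul_mu (by norm_num) le_rfl hk ht₀ h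
end
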